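/- arXiv:1909.07045 — 8 statements merged into one kernel-verified Lean document; each statement's English description precedes it below -/
import Mathlib

section
/- For all non-negative integers m and n, the ratio A(m,n) = (3m+3n)!·(3n)!·(2m)!·(2n)! / ((2m+3n)!·(m+2n)!·(m+n)!·m!·n!·n!) is an integer. -/
lemma div_rel (q a b c : ℕ) (h : c = a + b) :
    a/q + b/q ≤ c/q ∧ c/q ≤ a/q + b/q + 1 := by
  subst h
  rcases Nat.eq_zero_or_pos q with rfl | hq
  · simp
  · have h := Nat.add_div hq (a := a) (b := b)
    have ha := Nat.mod_lt a hq
    have hb := Nat.mod_lt b hq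
    split_ifs at h <;> omega

lemma core_rem_ineq (q r s : ℕ) (hr : r < q) (hs : s < q) :
    (2*r+3*s)/q + (r+2*s)/q + (r+s)/q ≤
    (3*r+3*s)/q + (3*s)/q + (2*r)/q + (2*s)/q := by
  have hr0 : r / q = 0 := Nat.div_eq_of_lt hr
  have hs0 : s / q = 0 := Nat.div_eq_of_lt hs
  have r1 := div_rel q s s (2*s) (by ring)
  have r2 := div_rel q s (2*s) (3*s) (by ring)
  have r3 := div_rel q s r (r+s) (by ring)
  have r4 := div_rel q s (r+s) (r+2*s) (by ring)
  have r5 := div_rel q s (2*r) (2*r+s) (by ring)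
  have r6 := div_rel q s (2*r+s) (2*r+2*s) (by ring)
  have r7 := div_rel q s (2*r+2*s) (2*r+3*s) (by ring)
  have r8 := div_rel q s (2*r+3*s) (2*r+4*s) (by ring)
  have r9 := div_rel q (2*s) r (r+2*s) (by ring)
  have r10 := div_rel q (2*s) (2*r) (2*r+2*s) (by ring)
  have r11 := div_rel q (2*s) (2*r+s) (2*r+3*s) (by ring)
  have r12 := div_rel q (2*s) (2*r+2*s) (2*r+4*s) (by ring)
  have r13 := div_rel q (3*s) (2*r) (2*r+3*s) (by ring)
  have r14 := div_rel q (3*s) (2*r+s) (2*r+4*s) (by ring)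
  have r15 := div_rel q r r (2*r) (by ring)
  have r16 := div_rel q r (r+s) (2*r+s) (by ring)
  have r17 := div_rel q r (r+2*s) (2*r+2*s) (by ring)
  have r18 := div_rel q r (2*r+3*s) (3*r+3*s) (by ring)
  have r19 := div_rel q (r+s) (r+s) (2*r+2*s) (by ring)
  have r20 := div_rel q (r+s) (r+2*s) (2*r+3*s) (by ring)
  have r21 := div_rel q (r+s) (2*r+2*s) (3*r+3*s) (by ring)
  have r22 := div_rel q (r+2*s) (r+2*s) (2*r+4*s) (by ring)
  have r23 := div_rel q (r+2*s) (2*r+s) (3*r+3*s) (by ring)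
  omega

lemma core_div_ineq (q m n : ℕ) :
    (2*m+3*n)/q + (m+2*n)/q + (m+n)/q + m/q + n/q + n/q ≤
    (3*m+3*n)/q + (3*n)/q + (2*m)/q + (2*n)/q := by
  rcases Nat.eq_zero_or_pos q with rfl | hq
  · simp
  obtain ⟨a, r, hr, rfl⟩ : ∃ a r, r < q ∧ m = q*a + r :=
    ⟨m / q, m % q, Nat.mod_lt _ hq, (Nat.div_add_mod m q).symm⟩
  obtain ⟨b, s, hs, rfl⟩ : ∃ b s, s < q ∧ n = q*b + s :=
    ⟨n / q, n % q, Nat.mod_lt _ hq, (Nat.div_add_mod n q).symm⟩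
  have key := core_rem_ineq q r s hr hs
  have h1 : (2*(q*a+r)+3*(q*b+s)) = q*(2*a+3*b) + (2*r+3*s) := by ring
  have h2 : ((q*a+r)+2*(q*b+s)) = q*(a+2*b) + (r+2*s) := by ring
  have h3 : ((q*a+r)+(q*b+s)) = q*(a+b) + (r+s) := by ring
  have h4 : (3*(q*a+r)+3*(q*b+s)) = q*(3*a+3*b) + (3*r+3*s) := by ring
  have h5 : (3*(q*b+s)) = q*(3*b) + 3*s := by ring
  have h6 : (2*(q*a+r)) = q*(2*a) + 2*r := by ring
  have h7 : (2*(q*b+s)) = q*(2*b) + 2*s := by ring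
  rw [h1, h2, h3, h4, h5, h6, h7, Nat.mul_add_div hq, Nat.mul_add_div hq,
    Nat.mul_add_div hq, Nat.mul_add_div hq, Nat.mul_add_div hq,
    Nat.mul_add_div hq, Nat.mul_add_div hq, Nat.mul_add_div hq,
    Nat.mul_add_div hq]
  have hrq : r / q = 0 := Nat.div_eq_of_lt hr
  have hsq : s / q = 0 := Nat.div_eq_of_lt hs
  omega

theorem factorial_ratio_A_integral (m n : ℕ) :
    (Nat.factorial (2*m + 3*n) * Nat.factorial (m + 2*n) * Nat.factorial (m + n) *
      Nat.factorial m * Nat.factorial n * Nat.factorial n) ∣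
    (Nat.factorial (3*m + 3*n) * Nat.factorial (3*n) * Nat.factorial (2*m) *
      Nat.factorial (2*n)) := by
  have hfne : ∀ k : ℕ, Nat.factorial k ≠ 0 := fun k => (Nat.factorial_pos k).ne'
  rw [← Nat.factorization_le_iff_dvd
    (by positivity) (by positivity)]
  intro p
  by_cases hp : p.Prime
  · haveI : Fact p.Prime := ⟨hp⟩
    have hval : ∀ k : ℕ, k ≤ 3*m + 3*n →
        (Nat.factorial k).factorization p =
          ∑ i ∈ Finset.Ico 1 (3*m+3*n+1), k / p ^ i := by
      intro k hk
      rw [Nat.factorization_def _ hp]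
      exact padicValNat_factorial (lt_of_le_of_lt
        (le_trans (Nat.log_mono_right hk) (Nat.log_le_self p _)) (Nat.lt_succ_self _))
    simp only [ne_eq, Nat.factorization_mul, Nat.mul_ne_zero_iff, Nat.factorial_ne_zero,
      not_false_eq_true, and_self, Finsupp.add_apply]
    rw [hval (2*m+3*n) (by omega), hval (m+2*n) (by omega), hval (m+n) (by omega),
      hval m (by omega), hval n (by omega), hval (3*m+3*n) (by omega),
      hval (3*n) (by omega), hval (2*m) (by omega), hval (2*n) (by omega)]
    rw [← Finset.sum_add_distrib, ← Finset.sum_add_distrib, ← Finset.sum_add_distrib,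
      ← Finset.sum_add_distrib, ← Finset.sum_add_distrib, ← Finset.sum_add_distrib,
      ← Finset.sum_add_distrib, ← Finset.sum_add_distrib]
    exact Finset.sum_le_sum fun i _ => core_div_ineq (p ^ i) m n
  · simp [Nat.factorization_eq_zero_of_not_prime _ hp]
end

section
/- For every non-negative integer n, the Chebyshev ratio C(n) = (30n)!·n! / ((15n)!·(10n)!·(6n)!) is an integer. -/
open Nat Finset

lemma key_div (a b : ℕ) : 15*a/b + (10*a/b + 6*a/b) ≤ 30*a/b + a/b := by
  rcases Nat.eq_zero_or_pos b with rfl | hb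
  · simp
  have h2 : 15*a/b = 30*a/b/2 := by
    rw [Nat.div_div_eq_div_mul, show 30*a = 15*a*2 by ring,
      Nat.mul_div_mul_right _ _ (by norm_num)]
  have h3 : 10*a/b = 30*a/b/3 := by
    rw [Nat.div_div_eq_div_mul, show 30*a = 10*a*3 by ring,
      Nat.mul_div_mul_right _ _ (by norm_num)]
  have h5 : 6*a/b = 30*a/b/5 := by
    rw [Nat.div_div_eq_div_mul, show 30*a = 6*a*5 by ring,
      Nat.mul_div_mul_right _ _ (by norm_num)]
  have hK : 30*a/b ≤ 30*(a/b) + 29 := by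
    have e : 30*a = 30*(a % b) + b*(30*(a/b)) := by
      conv_lhs => rw [← Nat.mod_add_div a b]
      ring
    rw [e, Nat.add_mul_div_left _ _ hb]
    have : 30*(a % b)/b < 30 := by
      rw [Nat.div_lt_iff_lt_mul hb]
      have := Nat.mod_lt a hb
      omega
    omega
  rw [h2, h3, h5]
  omega

theorem chebyshev_ratio_integral (n : ℕ) :
    (Nat.factorial (15*n) * Nat.factorial (10*n) * Nat.factorial (6*n)) ∣
    (Nat.factorial (30*n) * Nat.factorial n) := by
  rw [← Nat.factorization_le_iff_dvd (by positivity) (by positivity)]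
  intro p
  by_cases hp : p.Prime
  · haveI : Fact p.Prime := ⟨hp⟩
    simp only [Nat.factorization_mul (Nat.factorial_ne_zero _) (Nat.factorial_ne_zero _),
      Nat.factorization_mul (mul_ne_zero (Nat.factorial_ne_zero _) (Nat.factorial_ne_zero _))
        (Nat.factorial_ne_zero _), Finsupp.coe_add, Pi.add_apply]
    rw [Nat.factorization_def _ hp, Nat.factorization_def _ hp, Nat.factorization_def _ hp,
      Nat.factorization_def _ hp, Nat.factorization_def _ hp]
    set b := Nat.log p (30*n) + 1 with hb
    have hle : ∀ m : ℕ, m ≤ 30*n → Nat.log p m < b := fun m hm =>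
      Nat.lt_succ_of_le (Nat.log_mono_right hm)
    rw [padicValNat_factorial (p := p) (hle _ (by omega)),
        padicValNat_factorial (p := p) (hle _ (by omega)),
        padicValNat_factorial (p := p) (hle _ (by omega)),
        padicValNat_factorial (p := p) (hle _ (by omega)),
        padicValNat_factorial (p := p) (hle _ (by omega)),
        ← Finset.sum_add_distrib, ← Finset.sum_add_distrib, ← Finset.sum_add_distrib]
    exact Finset.sum_le_sum fun i _ => by have := key_div n (p ^ i); omega
  · simp [Nat.factorization_eq_zero_of_not_prime _ hp]
end

section
/- For all non-negative integers m ≤ n, the ratio m!·(2n)! / ((2m)!·n!·(n−m)!) is an integer. -/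
open Nat Finset

lemma key_div_ineq (q m d : ℕ) (hq : 0 < q) :
    2*m/q + (m+d)/q + d/q ≤ m/q + 2*(m+d)/q := by
  have h1 := Nat.add_div (a := m) (b := m) hq
  have h2 := Nat.add_div (a := m + d) (b := m + d) hq
  have h3 := Nat.add_div (a := m) (b := d) hq
  have h4 : (m + d) % q = (m % q + d % q) % q := Nat.add_mod m d q
  have h5 : m % q < q := Nat.mod_lt _ hq
  have h6 : d % q < q := Nat.mod_lt _ hq
  have h7 : (m % q + d % q) % q = if q ≤ m % q + d % q then m % q + d % q - q
      else m % q + d % q := by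
    split
    · rw [Nat.mod_eq_sub_mod (by omega), Nat.mod_eq_of_lt (by omega)]
    · exact Nat.mod_eq_of_lt (by omega)
  rw [two_mul, two_mul]
  split_ifs at h7 with hc
  · rw [h4, h7] at h2
    split_ifs at h1 h2 h3 <;> omega
  · rw [h4, h7] at h2
    split_ifs at h1 h2 h3 <;> omega

lemma key_ineq (p i m n : ℕ) (h : m ≤ n) :
    2*m/p^i + n/p^i + (n-m)/p^i ≤ m/p^i + 2*n/p^i := by
  rcases Nat.eq_zero_or_pos (p^i) with hq | hq
  · simp [hq]
  · obtain ⟨d, rfl⟩ := Nat.exists_eq_add_of_le h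
    simpa using key_div_ineq (p^i) m d hq

theorem factorial_ratio_third_family_integral (m n : ℕ) (h : m ≤ n) :
    (Nat.factorial (2*m) * Nat.factorial n * Nat.factorial (n - m)) ∣
    (Nat.factorial m * Nat.factorial (2*n)) := by
  rw [← Nat.factorization_le_iff_dvd (mul_ne_zero (mul_ne_zero (Nat.factorial_ne_zero _) (Nat.factorial_ne_zero _)) (Nat.factorial_ne_zero _)) (mul_ne_zero (Nat.factorial_ne_zero _) (Nat.factorial_ne_zero _))]
  intro p
  rcases em p.Prime with hp | hp
  · haveI : Fact p.Prime := ⟨hp⟩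
    have hfac : ∀ k : ℕ, (k.factorial).factorization p = padicValNat p k.factorial := by
      intro k
      rw [Nat.factorization_def _ hp]
    simp only [Nat.factorization_mul (Nat.factorial_ne_zero _) (Nat.factorial_ne_zero _),
      Nat.factorization_mul (mul_ne_zero (Nat.factorial_ne_zero (2*m)) (Nat.factorial_ne_zero n))
        (Nat.factorial_ne_zero _),
      Finsupp.coe_add, Pi.add_apply, hfac]
    set b := 2*n + 1 with hb
    have hlog : ∀ k : ℕ, k ≤ 2*n → Nat.log p k < b := by
      intro k hk
      exact lt_of_le_of_lt (Nat.log_mono_right hk) (by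
        calc Nat.log p (2*n) ≤ 2*n := Nat.log_le_self _ _
        _ < b := by omega)
    rw [padicValNat_factorial (hlog (2*m) (by omega)),
        padicValNat_factorial (hlog n (by omega)),
        padicValNat_factorial (hlog (n-m) (by omega)),
        padicValNat_factorial (hlog m (by omega)),
        padicValNat_factorial (hlog (2*n) (by omega))]
    rw [← Finset.sum_add_distrib, ← Finset.sum_add_distrib, ← Finset.sum_add_distrib]
    exact Finset.sum_le_sum fun i _ => key_ineq p i m n h
  · simp [Nat.factorization_eq_zero_of_not_prime _ hp]
end

section
/- For all non-negative integers m and n, the ratio (6m+30n)!·n! / ((3m+15n)!·(2m+10n)!·m!·(6n)!) is an integer. -/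
private lemma div_superadd (x y d : ℕ) : x / d + y / d ≤ (x + y) / d :=
  Nat.add_div_le_add_div x y d

private lemma div_subadd (x y d : ℕ) (hd : 0 < d) : (x + y) / d ≤ x / d + y / d + 1 := by
  have hx := Nat.div_add_mod x d
  have hy := Nat.div_add_mod y d
  have hx' : x % d < d := Nat.mod_lt _ hd
  have hy' : y % d < d := Nat.mod_lt _ hd
  have : x + y < (x / d + y / d + 2) * d := by nlinarith
  have h2 := (Nat.div_lt_iff_lt_mul hd).mpr this
  omega

/-- if 1/6 ≤ r/d < 1 then ⌊3r/d⌋ + ⌊2r/d⌋ + 1 ≤ ⌊6r/d⌋ -/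
private lemma sharp (d r : ℕ) (hd : 0 < d) (h6 : d ≤ 6 * r) (hr : r < d) :
    3 * r / d + 2 * r / d + 1 ≤ 6 * r / d := by
  rcases Nat.lt_or_ge (6 * r) (2 * d) with h | h
  · have e6 : 6 * r / d = 1 := Nat.div_eq_of_lt_le (by omega) (by omega)
    have e3 : 3 * r / d = 0 := Nat.div_eq_of_lt (by omega)
    have e2 : 2 * r / d = 0 := Nat.div_eq_of_lt (by omega)
    omega
  rcases Nat.lt_or_ge (6 * r) (3 * d) with h' | h'
  · have e6 : 6 * r / d = 2 := Nat.div_eq_of_lt_le (by omega) (by omega)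
    have e3 : 3 * r / d = 1 := Nat.div_eq_of_lt_le (by omega) (by omega)
    have e2 : 2 * r / d = 0 := Nat.div_eq_of_lt (by omega)
    omega
  rcases Nat.lt_or_ge (6 * r) (4 * d) with h'' | h''
  · have e6 : 6 * r / d = 3 := Nat.div_eq_of_lt_le (by omega) (by omega)
    have e3 : 3 * r / d = 1 := Nat.div_eq_of_lt_le (by omega) (by omega)
    have e2 : 2 * r / d = 1 := Nat.div_eq_of_lt_le (by omega) (by omega)
    omega
  rcases Nat.lt_or_ge (6 * r) (5 * d) with h''' | h'''
  · have e6 : 6 * r / d = 4 := Nat.div_eq_of_lt_le (by omega) (by omega)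
    have e3 : 3 * r / d = 2 := Nat.div_eq_of_lt_le (by omega) (by omega)
    have e2 : 2 * r / d = 1 := Nat.div_eq_of_lt_le (by omega) (by omega)
    omega
  · have e6 : 6 * r / d = 5 := Nat.div_eq_of_lt_le (by omega) (by omega)
    have e3 : 3 * r / d = 2 := Nat.div_eq_of_lt_le (by omega) (by omega)
    have e2 : 2 * r / d = 1 := Nat.div_eq_of_lt_le (by omega) (by omega)
    omega

/-- core floor inequality for fractional parts a/d, b/d -/
private lemma core (d a b : ℕ) (hd : 0 < d) (ha : a < d) (hb : b < d) :
    (3 * a + 15 * b) / d + (2 * a + 10 * b) / d + (6 * b) / d ≤ (6 * a + 30 * b) / d := by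
  set K := a + 5 * b with hK
  have e3 : 3 * a + 15 * b = 3 * K := by omega
  have e2 : 2 * a + 10 * b = 2 * K := by omega
  have e6 : 6 * a + 30 * b = 6 * K := by omega
  rw [e3, e2, e6]
  set q := K / d with hq
  set r := K % d with hr
  have hKdr : d * q + r = K := Nat.div_add_mod K d
  have hrd : r < d := Nat.mod_lt _ hd
  have E3 : 3 * K / d = 3 * r / d + 3 * q := by
    rw [show 3 * K = 3 * r + d * (3 * q) by rw [← hKdr]; ring, Nat.add_mul_div_left _ _ hd]
  have E2 : 2 * K / d = 2 * r / d + 2 * q := by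
    rw [show 2 * K = 2 * r + d * (2 * q) by rw [← hKdr]; ring, Nat.add_mul_div_left _ _ hd]
  have E6 : 6 * K / d = 6 * r / d + 6 * q := by
    rw [show 6 * K = 6 * r + d * (6 * q) by rw [← hKdr]; ring, Nat.add_mul_div_left _ _ hd]
  rw [E3, E2, E6]
  -- goal: 3r/d + 3q + (2r/d + 2q) + 6b/d ≤ 6r/d + 6q
  have h32 : 3 * r / d + 2 * r / d ≤ 6 * r / d := by
    calc 3 * r / d + 2 * r / d ≤ (3 * r + 2 * r) / d := div_superadd _ _ _
    _ ≤ 6 * r / d := Nat.div_le_div_right (by omega)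
  have hq5 : 5 * b / d ≤ q := Nat.div_le_div_right (by omega)
  have h65 : 6 * b / d ≤ 5 * b / d + 1 := by
    have h := div_subadd (5 * b) b d hd
    rw [show 5 * b + b = 6 * b by ring] at h
    have hb0 : b / d = 0 := Nat.div_eq_of_lt hb
    omega
  rcases Nat.lt_or_ge (5 * b / d) (6 * b / d) with hB | hA
  swap
  · -- case A : 6b/d ≤ 5b/d
    omega
  -- case B : 6b/d = 5b/d + 1
  obtain ⟨k', hk⟩ : ∃ k', 6 * b / d = k' + 1 := ⟨5 * b / d, by omega⟩
  have h5bd : 5 * b / d = k' := by omega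
  have hu0 := Nat.div_add_mod (5 * b) d
  rw [h5bd] at hu0
  obtain ⟨u, hu'⟩ : ∃ u, 5 * b % d = u := ⟨_, rfl⟩
  rw [hu'] at hu0
  -- hu0 : d * k' + u = 5 * b
  have hud : u < d := hu' ▸ Nat.mod_lt _ hd
  have hkd : (k' + 1) * d ≤ 6 * b := by rw [← hk]; exact Nat.div_mul_le_self _ _
  have hk5 : k' ≤ 4 := by
    have : 6 * b / d < 6 := by rw [Nat.div_lt_iff_lt_mul hd]; omega
    omega
  have h6u : d ≤ 6 * u := by interval_cases k' <;> omega
  rcases Nat.lt_or_ge (a + u) d with hB2 | hB1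
  · -- B2 : a + u < d, so q = k', r = a + u
    have hKeq : K = (a + u) + d * k' := by omega
    have hqe : q = k' := by
      rw [hq, hKeq, Nat.add_mul_div_left _ _ hd, Nat.div_eq_of_lt hB2]; omega
    have hre : r = a + u := by
      have h' := hKdr
      rw [hqe] at h'
      omega
    have hsh := sharp d r hd (by omega) hrd
    omega
  · -- B1 : a + u ≥ d, so q ≥ k' + 1
    have hexp : (k' + 1) * d = d * k' + d := by ring
    have hq' : (k' + 1) * d ≤ K := by omega
    have hqk : k' + 1 ≤ q := by rw [hq]; exact (Nat.le_div_iff_mul_le hd).mpr hq'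
    omega

/-- main division inequality, arbitrary m n d -/
private lemma key (d m n : ℕ) :
    (3 * m + 15 * n) / d + (2 * m + 10 * n) / d + m / d + (6 * n) / d
      ≤ (6 * m + 30 * n) / d + n / d := by
  rcases Nat.eq_zero_or_pos d with rfl | hd
  · simp
  set q1 := m / d with hq1
  set a := m % d with ha
  set q2 := n / d with hq2
  set b := n % d with hb'
  have hm : d * q1 + a = m := Nat.div_add_mod m d
  have hn : d * q2 + b = n := Nat.div_add_mod n d
  have had : a < d := Nat.mod_lt _ hd
  have hbd : b < d := Nat.mod_lt _ hd
  have E3 : (3 * m + 15 * n) / d = (3 * a + 15 * b) / d + (3 * q1 + 15 * q2) := by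
    rw [show 3 * m + 15 * n = (3 * a + 15 * b) + d * (3 * q1 + 15 * q2) by
      rw [← hm, ← hn]; ring, Nat.add_mul_div_left _ _ hd]
  have E2 : (2 * m + 10 * n) / d = (2 * a + 10 * b) / d + (2 * q1 + 10 * q2) := by
    rw [show 2 * m + 10 * n = (2 * a + 10 * b) + d * (2 * q1 + 10 * q2) by
      rw [← hm, ← hn]; ring, Nat.add_mul_div_left _ _ hd]
  have E6 : (6 * m + 30 * n) / d = (6 * a + 30 * b) / d + (6 * q1 + 30 * q2) := by
    rw [show 6 * m + 30 * n = (6 * a + 30 * b) + d * (6 * q1 + 30 * q2) by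
      rw [← hm, ← hn]; ring, Nat.add_mul_div_left _ _ hd]
  have E6n : (6 * n) / d = (6 * b) / d + 6 * q2 := by
    rw [show 6 * n = 6 * b + d * (6 * q2) by rw [← hn]; ring, Nat.add_mul_div_left _ _ hd]
  have ha0 : a / d = 0 := Nat.div_eq_of_lt had
  have hb0 : b / d = 0 := Nat.div_eq_of_lt hbd
  have hmd : m / d = q1 := rfl
  have hnd : n / d = q2 := rfl
  rw [E3, E2, E6, E6n]
  have := core d a b hd had hbd
  omega

theorem factorial_ratio_C_integral (m n : ℕ) :
    (Nat.factorial (3*m + 15*n) * Nat.factorial (2*m + 10*n) * Nat.factorial m *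
      Nat.factorial (6*n)) ∣
    (Nat.factorial (6*m + 30*n) * Nat.factorial n) := by
  have hden : Nat.factorial (3*m + 15*n) * Nat.factorial (2*m + 10*n) * Nat.factorial m *
      Nat.factorial (6*n) ≠ 0 := by positivity
  have hnum : Nat.factorial (6*m + 30*n) * Nat.factorial n ≠ 0 := by positivity
  rw [← Nat.factorization_le_iff_dvd hden hnum]
  intro p
  by_cases hp : p.Prime
  swap
  · simp [Nat.factorization_eq_zero_of_not_prime _ hp]
  haveI := Fact.mk hp
  have fne : ∀ k : ℕ, Nat.factorial k ≠ 0 := fun k => (Nat.factorial_pos k).ne'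
  rw [Nat.factorization_mul (by positivity) (fne _), Nat.factorization_mul (by positivity) (fne _),
    Nat.factorization_mul (fne _) (fne _), Nat.factorization_mul (fne _) (fne _)]
  simp only [Finsupp.coe_add, Pi.add_apply]
  rw [Nat.factorization_def _ hp, Nat.factorization_def _ hp, Nat.factorization_def _ hp,
    Nat.factorization_def _ hp, Nat.factorization_def _ hp, Nat.factorization_def _ hp]
  set B := Nat.log p (6*m + 30*n) + 1 with hB
  have hlog : ∀ x : ℕ, x ≤ 6*m + 30*n → Nat.log p x < B := fun x hx =>
    Nat.lt_succ_of_le (Nat.log_mono_right hx)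
  rw [padicValNat_factorial (hlog _ (by omega)), padicValNat_factorial (hlog _ (by omega)),
    padicValNat_factorial (hlog _ (by omega)), padicValNat_factorial (hlog _ (by omega)),
    padicValNat_factorial (hlog _ (by omega)), padicValNat_factorial (hlog _ (by omega))]
  rw [← Finset.sum_add_distrib, ← Finset.sum_add_distrib, ← Finset.sum_add_distrib,
    ← Finset.sum_add_distrib]
  apply Finset.sum_le_sum
  intro i _
  exact key (p ^ i) m n
end

section
/- For all real numbers x and y, ⌊3x+3y⌋ + ⌊3y⌋ + ⌊2x⌋ + ⌊2y⌋ ≥ ⌊2x+3y⌋ + ⌊x+2y⌋ + ⌊x+y⌋ + ⌊x⌋ + 2⌊y⌋ holds when x, y ≥ 0. -/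
private lemma frac_key (a b : ℝ) (ha0 : 0 ≤ a) (ha1 : a < 1) (hb0 : 0 ≤ b) (hb1 : b < 1) :
    ⌊2*a + 3*b⌋ + ⌊a + 2*b⌋ + ⌊a + b⌋ ≤ ⌊3*a + 3*b⌋ + ⌊3*b⌋ + ⌊2*a⌋ + ⌊2*b⌋ := by
  have ha : ⌊a⌋ = 0 := by
    rw [Int.floor_eq_zero_iff]; exact ⟨ha0, ha1⟩
  -- nonnegativity
  have n1 : 0 ≤ ⌊2*a⌋ := Int.floor_nonneg.2 (by linarith)
  have n2 : 0 ≤ ⌊2*b⌋ := Int.floor_nonneg.2 (by linarith)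
  have n3 : 0 ≤ ⌊3*b⌋ := Int.floor_nonneg.2 (by linarith)
  have n4 : 0 ≤ ⌊a + b⌋ := Int.floor_nonneg.2 (by linarith)
  have n5 : 0 ≤ ⌊a + 2*b⌋ := Int.floor_nonneg.2 (by linarith)
  have n6 : 0 ≤ ⌊2*a + 2*b⌋ := Int.floor_nonneg.2 (by linarith)
  have n7 : 0 ≤ ⌊2*a + 3*b⌋ := Int.floor_nonneg.2 (by linarith)
  have n8 : 0 ≤ ⌊3*a + 3*b⌋ := Int.floor_nonneg.2 (by linarith)
  -- upper bounds
  have u1 : ⌊2*a⌋ < 2 := Int.floor_lt.2 (by push_cast; linarith)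
  have u2 : ⌊2*b⌋ < 2 := Int.floor_lt.2 (by push_cast; linarith)
  have u3 : ⌊3*b⌋ < 3 := Int.floor_lt.2 (by push_cast; linarith)
  have u4 : ⌊a + b⌋ < 2 := Int.floor_lt.2 (by push_cast; linarith)
  -- pairwise subadditivity constraints
  have h1l := Int.le_floor_add a a
  have h1u := Int.le_floor_add_floor a a
  rw [show a + a = 2*a by ring] at h1l h1u
  have h2l := Int.le_floor_add a (2*b)
  have h2u := Int.le_floor_add_floor a (2*b)
  have h3l := Int.le_floor_add a (a + 2*b)
  have h3u := Int.le_floor_add_floor a (a + 2*b)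
  rw [show a + (a + 2*b) = 2*a + 2*b by ring] at h3l h3u
  have h4l := Int.le_floor_add a (2*a + 3*b)
  have h4u := Int.le_floor_add_floor a (2*a + 3*b)
  rw [show a + (2*a + 3*b) = 3*a + 3*b by ring] at h4l h4u
  have h5l := Int.le_floor_add (a + b) (a + b)
  have h5u := Int.le_floor_add_floor (a + b) (a + b)
  rw [show (a + b) + (a + b) = 2*a + 2*b by ring] at h5l h5u
  have h6l := Int.le_floor_add (a + b) (a + 2*b)
  have h6u := Int.le_floor_add_floor (a + b) (a + 2*b)
  rw [show (a + b) + (a + 2*b) = 2*a + 3*b by ring] at h6l h6u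
  have h7l := Int.le_floor_add (a + b) (2*a + 2*b)
  have h7u := Int.le_floor_add_floor (a + b) (2*a + 2*b)
  rw [show (a + b) + (2*a + 2*b) = 3*a + 3*b by ring] at h7l h7u
  have h8l := Int.le_floor_add (2*a) (2*b)
  have h8u := Int.le_floor_add_floor (2*a) (2*b)
  rw [show 2*a + 2*b = 2*a + 2*b by ring] at h8l h8u
  have h9l := Int.le_floor_add (2*a) (3*b)
  have h9u := Int.le_floor_add_floor (2*a) (3*b)
  rw [show 2*a + 3*b = 2*a + 3*b by ring] at h9l h9u
  -- the cut: 3⌊a+2b⌋ ≤ ⌊3a+3b⌋ + ⌊3b⌋ + 1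
  have cut : 3*⌊a + 2*b⌋ ≤ ⌊3*a + 3*b⌋ + ⌊3*b⌋ + 1 := by
    have c1 := Int.floor_le (a + 2*b)
    have c2 := Int.lt_floor_add_one (3*a + 3*b)
    have c3 := Int.lt_floor_add_one (3*b)
    have : (3*⌊a + 2*b⌋ : ℝ) < ((⌊3*a + 3*b⌋ + ⌊3*b⌋ + 2 : ℤ) : ℝ) := by
      push_cast; linarith
    have h := (by exact_mod_cast this : 3*⌊a + 2*b⌋ < ⌊3*a + 3*b⌋ + ⌊3*b⌋ + 2)
    omega
  omega

theorem floor_ineq_A (x y : ℝ) (hx : 0 ≤ x) (hy : 0 ≤ y) :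
    ⌊2*x + 3*y⌋ + ⌊x + 2*y⌋ + ⌊x + y⌋ + ⌊x⌋ + 2*⌊y⌋ ≤
    ⌊3*x + 3*y⌋ + ⌊3*y⌋ + ⌊2*x⌋ + ⌊2*y⌋ := by
  have ha0 : 0 ≤ Int.fract x := Int.fract_nonneg x
  have ha1 : Int.fract x < 1 := Int.fract_lt_one x
  have hb0 : 0 ≤ Int.fract y := Int.fract_nonneg y
  have hb1 : Int.fract y < 1 := Int.fract_lt_one y
  have e1 : ⌊2*x + 3*y⌋ = ⌊2*Int.fract x + 3*Int.fract y⌋ + (2*⌊x⌋ + 3*⌊y⌋) := by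
    rw [show 2*x + 3*y = 2*Int.fract x + 3*Int.fract y + ((2*⌊x⌋ + 3*⌊y⌋ : ℤ) : ℝ) by
      unfold Int.fract; push_cast; ring, Int.floor_add_intCast]
  have e2 : ⌊x + 2*y⌋ = ⌊Int.fract x + 2*Int.fract y⌋ + (⌊x⌋ + 2*⌊y⌋) := by
    rw [show x + 2*y = Int.fract x + 2*Int.fract y + ((⌊x⌋ + 2*⌊y⌋ : ℤ) : ℝ) by
      unfold Int.fract; push_cast; ring, Int.floor_add_intCast]
  have e3 : ⌊x + y⌋ = ⌊Int.fract x + Int.fract y⌋ + (⌊x⌋ + ⌊y⌋) := by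
    rw [show x + y = Int.fract x + Int.fract y + ((⌊x⌋ + ⌊y⌋ : ℤ) : ℝ) by
      unfold Int.fract; push_cast; ring, Int.floor_add_intCast]
  have e4 : ⌊3*x + 3*y⌋ = ⌊3*Int.fract x + 3*Int.fract y⌋ + (3*⌊x⌋ + 3*⌊y⌋) := by
    rw [show 3*x + 3*y = 3*Int.fract x + 3*Int.fract y + ((3*⌊x⌋ + 3*⌊y⌋ : ℤ) : ℝ) by
      unfold Int.fract; push_cast; ring, Int.floor_add_intCast]
  have e5 : ⌊3*y⌋ = ⌊3*Int.fract y⌋ + 3*⌊y⌋ := by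
    rw [show 3*y = 3*Int.fract y + ((3*⌊y⌋ : ℤ) : ℝ) by
      unfold Int.fract; push_cast; ring, Int.floor_add_intCast]
  have e6 : ⌊2*x⌋ = ⌊2*Int.fract x⌋ + 2*⌊x⌋ := by
    rw [show 2*x = 2*Int.fract x + ((2*⌊x⌋ : ℤ) : ℝ) by
      unfold Int.fract; push_cast; ring, Int.floor_add_intCast]
  have e7 : ⌊2*y⌋ = ⌊2*Int.fract y⌋ + 2*⌊y⌋ := by
    rw [show 2*y = 2*Int.fract y + ((2*⌊y⌋ : ℤ) : ℝ) by
      unfold Int.fract; push_cast; ring, Int.floor_add_intCast]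
  have key := frac_key (Int.fract x) (Int.fract y) ha0 ha1 hb0 hb1
  rw [e1, e2, e3, e4, e5, e6, e7]
  omega
end

section
/- For all non-negative integers m ≤ n, the ratio [m]!·[2n]! / ([2m]!·[n]!·[n−m]!) is a polynomial in q with non-negative integer coefficients. -/
noncomputable def qfact (k : ℕ) : Polynomial ℤ :=
  ∏ i ∈ Finset.range k, ∑ j ∈ Finset.range (i + 1), Polynomial.X ^ j

open Polynomial Finset

noncomputable def qint (k : ℕ) : Polynomial ℤ := ∑ j ∈ Finset.range k, X ^ j

lemma qfact_eq (k : ℕ) : qfact k = ∏ i ∈ Finset.range k, qint (i + 1) := rfl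

lemma qfact_succ (k : ℕ) : qfact (k + 1) = qfact k * qint (k + 1) := by
  rw [qfact_eq, qfact_eq, Finset.prod_range_succ]

lemma qfact_zero : qfact 0 = 1 := rfl

lemma qint_mul (k : ℕ) : qint k * (X - 1 : Polynomial ℤ) = X ^ k - 1 := geom_sum_mul X k

lemma qint_add (s t : ℕ) : qint (s + t) = qint s + X ^ s * qint t := by
  rw [qint, qint, qint, Finset.sum_range_add, Finset.mul_sum]
  simp [pow_add]

/-- q-binomial via Pascal recursion -/
noncomputable def G : ℕ → ℕ → Polynomial ℤ
  | _, 0 => 1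
  | 0, _ + 1 => 1
  | a + 1, b + 1 => G a (b + 1) + X ^ (a + 1) * G (a + 1) b
  termination_by a b => (a, b)

lemma G_fact : ∀ a b : ℕ, qfact a * qfact b * G a b = qfact (a + b)
  | a, 0 => by simp [G, qfact_zero]
  | 0, b + 1 => by simp [G, qfact_zero]
  | a + 1, b + 1 => by
    have iha := G_fact a (b + 1)
    have ihb := G_fact (a + 1) b
    have hab : a + 1 + b = a + b + 1 := by ring
    have hab2 : a + (b + 1) = a + b + 1 := by ring
    rw [hab2] at iha
    rw [hab] at ihb
    have pascal : qint (a + 1) + X ^ (a + 1) * qint (b + 1) = qint (a + b + 2) := by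
      rw [show a + b + 2 = (a + 1) + (b + 1) by ring]
      exact (qint_add (a + 1) (b + 1)).symm
    rw [show G (a + 1) (b + 1) = G a (b + 1) + X ^ (a + 1) * G (a + 1) b from by rw [G],
      show a + 1 + (b + 1) = (a + b + 1) + 1 by ring, qfact_succ (a + b + 1),
      qfact_succ a, qfact_succ b]
    rw [qfact_succ b] at iha
    rw [qfact_succ a] at ihb
    linear_combination qint (a + 1) * iha + X ^ (a + 1) * qint (b + 1) * ihb +
      qfact (a + b + 1) * pascal
  termination_by a b => (a, b)

lemma coeff_mul_nonneg {p q : Polynomial ℤ} (hp : ∀ i, 0 ≤ p.coeff i)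
    (hq : ∀ i, 0 ≤ q.coeff i) : ∀ i, 0 ≤ (p * q).coeff i := by
  intro i
  rw [Polynomial.coeff_mul]
  exact Finset.sum_nonneg fun x _ => mul_nonneg (hp _) (hq _)

lemma coeff_add_nonneg {p q : Polynomial ℤ} (hp : ∀ i, 0 ≤ p.coeff i)
    (hq : ∀ i, 0 ≤ q.coeff i) : ∀ i, 0 ≤ (p + q).coeff i := by
  intro i
  rw [Polynomial.coeff_add]
  exact add_nonneg (hp i) (hq i)

lemma coeff_one_nonneg : ∀ i, 0 ≤ (1 : Polynomial ℤ).coeff i := by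
  intro i
  rw [Polynomial.coeff_one]
  split <;> norm_num

lemma coeff_Xpow_nonneg (k : ℕ) : ∀ i, 0 ≤ ((X : Polynomial ℤ) ^ k).coeff i := by
  intro i
  rw [Polynomial.coeff_X_pow]
  split <;> norm_num

lemma G_nonneg : ∀ a b : ℕ, ∀ i, 0 ≤ (G a b).coeff i
  | a, 0 => by rw [show G a 0 = 1 from by cases a <;> rw [G]]; exact coeff_one_nonneg
  | 0, b + 1 => by rw [show G 0 (b + 1) = 1 from by rw [G]]; exact coeff_one_nonneg
  | a + 1, b + 1 => by
    rw [show G (a + 1) (b + 1) = G a (b + 1) + X ^ (a + 1) * G (a + 1) b from by rw [G]]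
    exact coeff_add_nonneg (G_nonneg a (b + 1))
      (coeff_mul_nonneg (coeff_Xpow_nonneg _) (G_nonneg (a + 1) b))
  termination_by a b => (a, b)

/-- the positive polynomial P with qfact(2m) qfact(m+d) qfact(d) P = qfact(m) qfact(2(m+d)) -/
noncomputable def Pp : ℕ → ℕ → Polynomial ℤ
  | 0, d => G d d
  | _ + 1, 0 => 1
  | m + 1, d + 1 =>
      X ^ (d + 1) * Pp m (d + 1) +
        (1 + X ^ (2*m + d + 2) + X ^ (3*m + d + 3) + X ^ (3*m + 2*d + 4)) * Pp (m + 1) d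
  termination_by m d => (m, d)

lemma Pp_nonneg : ∀ m d : ℕ, ∀ i, 0 ≤ (Pp m d).coeff i
  | 0, d => by rw [show Pp 0 d = G d d from by rw [Pp]]; exact G_nonneg d d
  | m + 1, 0 => by rw [show Pp (m + 1) 0 = 1 from by rw [Pp]]; exact coeff_one_nonneg
  | m + 1, d + 1 => by
    rw [show Pp (m + 1) (d + 1) = X ^ (d + 1) * Pp m (d + 1) +
        (1 + X ^ (2*m + d + 2) + X ^ (3*m + d + 3) + X ^ (3*m + 2*d + 4)) * Pp (m + 1) d
      from by rw [Pp]]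
    exact coeff_add_nonneg
      (coeff_mul_nonneg (coeff_Xpow_nonneg _) (Pp_nonneg m (d + 1)))
      (coeff_mul_nonneg
        (coeff_add_nonneg (coeff_add_nonneg (coeff_add_nonneg coeff_one_nonneg
          (coeff_Xpow_nonneg _)) (coeff_Xpow_nonneg _)) (coeff_Xpow_nonneg _))
        (Pp_nonneg (m + 1) d))
  termination_by m d => (m, d)

lemma key_abstract {R : Type*} [CommRing R] [IsDomain R] (x y q1 q2 q3 q4 q5 q6 q7 a b : R)
    (hy : y ≠ 0)
    (h1 : q1 * y = a^2 * x - 1) (h2 : q2 * y = a^2 * x^2 - 1) (h3 : q3 * y = a * b * x^2 - 1)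
    (h4 : q4 * y = b * x - 1) (h5 : q5 * y = a * x - 1)
    (h6 : q6 * y = a^2 * b^2 * x^3 - 1) (h7 : q7 * y = a^2 * b^2 * x^4 - 1) :
    b * x * q1 * q2 * q3 + (1 + a^2*b*x^2 + a^3*b*x^3 + a^3*b^2*x^4) * (q3 * q4 * q5)
      = q5 * (q6 * q7) := by
  apply mul_right_cancel₀ (pow_ne_zero 3 hy)
  calc (b * x * q1 * q2 * q3 + (1 + a^2*b*x^2 + a^3*b*x^3 + a^3*b^2*x^4) * (q3 * q4 * q5)) * y^3
      = b * x * ((q1*y) * ((q2*y) * (q3*y))) +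
        (1 + a^2*b*x^2 + a^3*b*x^3 + a^3*b^2*x^4) * ((q3*y) * ((q4*y) * (q5*y))) := by ring
    _ = b * x * ((a^2*x - 1) * ((a^2*x^2 - 1) * (a*b*x^2 - 1))) +
        (1 + a^2*b*x^2 + a^3*b*x^3 + a^3*b^2*x^4) *
          ((a*b*x^2 - 1) * ((b*x - 1) * (a*x - 1))) := by rw [h1, h2, h3, h4, h5]
    _ = (a*x - 1) * ((a^2*b^2*x^3 - 1) * (a^2*b^2*x^4 - 1)) := by ring
    _ = (q5*y) * ((q6*y) * (q7*y)) := by rw [h5, h6, h7]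
    _ = q5 * (q6 * q7) * y^3 := by ring

lemma X_sub_one_ne : (X - 1 : Polynomial ℤ) ≠ 0 := by
  intro hc
  have := congrArg (Polynomial.eval 0) hc
  simp at this

lemma keyId (m d : ℕ) :
    X ^ (d + 1) * qint (2*m + 1) * qint (2*m + 2) * qint (m + d + 2)
      + (1 + X ^ (2*m + d + 2) + X ^ (3*m + d + 3) + X ^ (3*m + 2*d + 4)) *
          (qint (m + d + 2) * qint (d + 1) * qint (m + 1))
      = qint (m + 1) * (qint (2*m + 2*d + 3) * qint (2*m + 2*d + 4)) := by
  have e : ∀ k : ℕ, qint k * (X - 1 : Polynomial ℤ) = X ^ k - 1 := qint_mul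
  have key := key_abstract (X : Polynomial ℤ) (X - 1) (qint (2*m+1)) (qint (2*m+2))
    (qint (m+d+2)) (qint (d+1)) (qint (m+1)) (qint (2*m+2*d+3)) (qint (2*m+2*d+4))
    (X ^ m) (X ^ d) X_sub_one_ne
    (by rw [e]; ring) (by rw [e]; ring) (by rw [e]; ring) (by rw [e]; ring)
    (by rw [e]; ring) (by rw [e]; ring) (by rw [e]; ring)
  calc X ^ (d + 1) * qint (2*m + 1) * qint (2*m + 2) * qint (m + d + 2)
      + (1 + X ^ (2*m + d + 2) + X ^ (3*m + d + 3) + X ^ (3*m + 2*d + 4)) *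
          (qint (m + d + 2) * qint (d + 1) * qint (m + 1))
      = X ^ d * X * qint (2*m+1) * qint (2*m+2) * qint (m+d+2)
        + (1 + (X^m)^2*(X^d)*X^2 + (X^m)^3*(X^d)*X^3 + (X^m)^3*(X^d)^2*X^4) *
          (qint (m+d+2) * qint (d+1) * qint (m+1)) := by ring
    _ = qint (m + 1) * (qint (2*m + 2*d + 3) * qint (2*m + 2*d + 4)) := key

lemma Pp_fact : ∀ m d : ℕ, qfact (2*m) * qfact (m + d) * qfact d * Pp m d
    = qfact m * qfact (2*(m + d))
  | 0, d => by
    rw [show Pp 0 d = G d d from by rw [Pp]]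
    have hG := G_fact d d
    rw [show 2*0 = 0 by ring, show 0 + d = d by ring, show 2*d = d + d by ring, qfact_zero]
    linear_combination hG
  | m + 1, 0 => by
    rw [show Pp (m + 1) 0 = 1 from by rw [Pp]]
    rw [qfact_zero]
    ring
  | m + 1, d + 1 => by
    have ih1 := Pp_fact m (d + 1)
    have ih2 := Pp_fact (m + 1) d
    have key := keyId m d
    rw [show Pp (m + 1) (d + 1) = X ^ (d + 1) * Pp m (d + 1) +
        (1 + X ^ (2*m + d + 2) + X ^ (3*m + d + 3) + X ^ (3*m + 2*d + 4)) * Pp (m + 1) d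
      from by rw [Pp],
      show 2*(m+1) = (2*m + 1) + 1 by ring, qfact_succ, qfact_succ (2*m),
      show m + 1 + (d + 1) = (m + d + 1) + 1 by ring, qfact_succ (m + d + 1),
      qfact_succ d, qfact_succ m,
      show 2*(m + d + 1 + 1) = (2*m + 2*d + 3) + 1 by ring, qfact_succ (2*m + 2*d + 3),
      show 2*m + 2*d + 3 = (2*m + 2*d + 2) + 1 by ring, qfact_succ (2*m + 2*d + 2),
      show 2*m + 1 + 1 = 2*m + 2 by ring, show m + d + 1 + 1 = m + d + 2 by ring,
      show 2*m + 2*d + 2 + 1 = 2*m + 2*d + 3 by ring,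
      show 2*m + 2*d + 2 + 1 + 1 = 2*m + 2*d + 4 by ring]
    rw [show m + (d + 1) = (m + d + 1) by ring, qfact_succ d,
      show 2*(m + d + 1) = 2*m + 2*d + 2 by ring] at ih1
    rw [show 2*(m+1) = (2*m + 1) + 1 by ring, qfact_succ, qfact_succ (2*m),
      show m + 1 + d = m + d + 1 by ring, qfact_succ m,
      show 2*(m + d + 1) = 2*m + 2*d + 2 by ring,
      show 2*m + 1 + 1 = 2*m + 2 by ring] at ih2
    linear_combination
      (X ^ (d + 1) * qint (2*m + 1) * qint (2*m + 2) * qint (m + d + 2)) * ih1 +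
      ((1 + X ^ (2*m + d + 2) + X ^ (3*m + d + 3) + X ^ (3*m + 2*d + 4)) *
        qint (m + d + 2) * qint (d + 1)) * ih2 +
      (qfact m * qfact (2*m + 2*d + 2)) * key
  termination_by m d => (m, d)

theorem qThirdFamily_nonneg_coeffs (m n : ℕ) (h : m ≤ n) :
    ∃ P : Polynomial ℤ, qfact (2*m) * qfact n * qfact (n - m) * P = qfact m * qfact (2*n) ∧
      ∀ i, 0 ≤ P.coeff i := by
  refine ⟨Pp m (n - m), ?_, Pp_nonneg m (n - m)⟩
  have hd : m + (n - m) = n := Nat.add_sub_cancel' h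
  have := Pp_fact m (n - m)
  rw [hd] at this
  exact this
end

section
/- For all non-negative integers m and n, the q-factorial ratio A_q(m,n) = [3m+3n]!·[3n]!·[2m]!·[2n]! / ([2m+3n]!·[m+2n]!·[m+n]!·[m]!·[n]!·[n]!) is a polynomial in q with integer coefficients. -/
open Polynomial Finset

lemma qfact_eq_s10 {K k : ℕ} (hk : k ≤ K) :
    qfact k = ∏ d ∈ Finset.Icc 2 K, (cyclotomic d ℤ) ^ (k / d) := by
  have h1 : qfact k = ∏ j ∈ Finset.Icc 1 k, ∏ d ∈ j.divisors.erase 1, cyclotomic d ℤ := by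
    rw [qfact, ← Finset.Ico_add_one_right_eq_Icc, Finset.prod_Ico_eq_prod_range]
    rw [show k + 1 - 1 = k from rfl]
    refine Finset.prod_congr rfl fun i _ => ?_
    rw [add_comm 1 i, ← prod_cyclotomic_eq_geom_sum (by omega) ℤ]
  have h2 : ∀ j ∈ Finset.Icc 1 k, j.divisors.erase 1 = (Finset.Icc 2 K).filter (· ∣ j) := by
    intro j hj
    rw [Finset.mem_Icc] at hj
    ext d
    simp only [Finset.mem_erase, Nat.mem_divisors, Finset.mem_filter, Finset.mem_Icc]
    constructor
    · rintro ⟨hd1, hdvd, hj0⟩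
      have hd0 : d ≠ 0 := by
        rintro rfl
        have := Nat.eq_zero_of_zero_dvd hdvd
        omega
      have := Nat.le_of_dvd (by omega) hdvd
      exact ⟨⟨by omega, by omega⟩, hdvd⟩
    · rintro ⟨⟨h2d, hdK⟩, hdvd⟩
      exact ⟨by omega, hdvd, by omega⟩
  rw [h1]
  rw [(Finset.prod_congr rfl fun j hj => by rw [h2 j hj] :
      (∏ j ∈ Finset.Icc 1 k, ∏ d ∈ j.divisors.erase 1, cyclotomic d ℤ)
        = ∏ j ∈ Finset.Icc 1 k, ∏ d ∈ (Finset.Icc 2 K).filter (· ∣ j), cyclotomic d ℤ)]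
  rw [Finset.prod_comm' (t' := Finset.Icc 2 K)
    (s' := fun d => (Finset.Icc 1 k).filter (d ∣ ·))
    (by intro j d; simp only [Finset.mem_filter]; tauto)]
  refine Finset.prod_congr rfl fun d _ => ?_
  rw [Finset.prod_const]
  congr 1
  rw [show Finset.Icc 1 k = Finset.Ioc 0 k from Finset.Icc_add_one_left_eq_Ioc 0 k]
  exact Nat.Ioc_filter_dvd_card_eq_div k d

set_option maxHeartbeats 4000000 in
lemma core' (d q1 q2 q3 q4 q5 q6 q7 r s : ℕ) (hr : r < d) (hs : s < d)
    (h1 : d*q1 ≤ 2*r+3*s) (h1' : 2*r+3*s < d*q1+d) (hb1 : q1 < 5)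
    (h2 : d*q2 ≤ r+2*s) (h2' : r+2*s < d*q2+d) (hb2 : q2 < 3)
    (h3 : d*q3 ≤ r+s) (h3' : r+s < d*q3+d) (hb3 : q3 < 2)
    (h4 : d*q4 ≤ 3*r+3*s) (h4' : 3*r+3*s < d*q4+d) (hb4 : q4 < 6)
    (h5 : d*q5 ≤ 3*s) (h5' : 3*s < d*q5+d) (hb5 : q5 < 3)
    (h6 : d*q6 ≤ 2*r) (h6' : 2*r < d*q6+d) (hb6 : q6 < 2)
    (h7 : d*q7 ≤ 2*s) (h7' : 2*s < d*q7+d) (hb7 : q7 < 2) :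
    q1 + q2 + q3 ≤ q4 + q5 + q6 + q7 := by
  interval_cases q1 <;> interval_cases q2 <;> interval_cases q3 <;> interval_cases q4 <;>
    interval_cases q5 <;> interval_cases q6 <;> interval_cases q7 <;> omega

lemma core_s10 (d r s : ℕ) (hr : r < d) (hs : s < d) :
    (2*r+3*s)/d + (r+2*s)/d + (r+s)/d ≤ (3*r+3*s)/d + (3*s)/d + (2*r)/d + (2*s)/d := by
  have hd : 0 < d := by omega
  have H : ∀ N B : ℕ, N < B * d → d * (N/d) ≤ N ∧ N < d * (N/d) + d ∧ N/d < B := by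
    intro N B h
    refine ⟨Nat.mul_div_le N d, ?_, Nat.div_lt_of_lt_mul (by rwa [mul_comm] at h)⟩
    have h1 := Nat.div_add_mod N d
    have h2 := Nat.mod_lt N hd
    omega
  obtain ⟨a1, a1', a1''⟩ := H (2*r+3*s) 5 (by omega)
  obtain ⟨a2, a2', a2''⟩ := H (r+2*s) 3 (by omega)
  obtain ⟨a3, a3', a3''⟩ := H (r+s) 2 (by omega)
  obtain ⟨a4, a4', a4''⟩ := H (3*r+3*s) 6 (by omega)
  obtain ⟨a5, a5', a5''⟩ := H (3*s) 3 (by omega)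
  obtain ⟨a6, a6', a6''⟩ := H (2*r) 2 (by omega)
  obtain ⟨a7, a7', a7''⟩ := H (2*s) 2 (by omega)
  exact core' d _ _ _ _ _ _ _ r s hr hs a1 a1' a1'' a2 a2' a2'' a3 a3' a3''
    a4 a4' a4'' a5 a5' a5'' a6 a6' a6'' a7 a7' a7''

lemma exponent_le (m n d : ℕ) :
    (2*m+3*n)/d + (m+2*n)/d + (m+n)/d + m/d + n/d + n/d ≤
      (3*m+3*n)/d + (3*n)/d + (2*m)/d + (2*n)/d := by
  rcases Nat.eq_zero_or_pos d with rfl | hd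
  · simp
  have em : m = d * (m / d) + m % d := (Nat.div_add_mod m d).symm
  have en : n = d * (n / d) + n % d := (Nat.div_add_mod n d).symm
  have key : ∀ α β : ℕ, (α*m+β*n)/d = α*(m/d)+β*(n/d) + (α*(m%d)+β*(n%d))/d := by
    intro α β
    have h : α*m+β*n = d*(α*(m/d)+β*(n/d)) + (α*(m%d)+β*(n%d)) := by
      conv_lhs => rw [em, en]
      ring
    rw [h, Nat.mul_add_div hd]
  have hrm : m % d < d := Nat.mod_lt _ hd
  have hrn : n % d < d := Nat.mod_lt _ hd
  have h1 := key 2 3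
  have h2 := key 1 2
  have h3 := key 1 1
  have h4 := key 3 3
  have h5 := key 0 3
  have h6 := key 2 0
  have h7 := key 0 2
  simp only [one_mul, zero_mul, zero_add, add_zero] at h1 h2 h3 h4 h5 h6 h7
  rw [h1, h2, h3, h4, h5, h6, h7]
  have hcore := core_s10 d (m % d) (n % d) hrm hrn
  linarith

theorem qA_polynomial (m n : ℕ) :
    ∃ P : Polynomial ℤ,
      qfact (2*m + 3*n) * qfact (m + 2*n) * qfact (m + n) * qfact m * qfact n * qfact n * P =
      qfact (3*m + 3*n) * qfact (3*n) * qfact (2*m) * qfact (2*n) := by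
  set K := 3*m + 3*n with hK
  refine ⟨∏ d ∈ Finset.Icc 2 K, (cyclotomic d ℤ) ^
      (((3*m+3*n)/d + (3*n)/d + (2*m)/d + (2*n)/d) -
        ((2*m+3*n)/d + (m+2*n)/d + (m+n)/d + m/d + n/d + n/d)), ?_⟩
  rw [qfact_eq_s10 (show 2*m+3*n ≤ K by omega), qfact_eq_s10 (show m+2*n ≤ K by omega),
    qfact_eq_s10 (show m+n ≤ K by omega), qfact_eq_s10 (show m ≤ K by omega),
    qfact_eq_s10 (show n ≤ K by omega), qfact_eq_s10 (show 3*m+3*n ≤ K by omega),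
    qfact_eq_s10 (show 3*n ≤ K by omega), qfact_eq_s10 (show 2*m ≤ K by omega),
    qfact_eq_s10 (show 2*n ≤ K by omega)]
  simp only [← Finset.prod_mul_distrib]
  refine Finset.prod_congr rfl fun d _ => ?_
  simp only [← pow_add]
  congr 1
  exact Nat.add_sub_cancel' (exponent_le m n d)
end

section
/- For all real x, y ≥ 0, ⌊6x+30y⌋ + ⌊y⌋ ≥ ⌊3x+15y⌋ + ⌊2x+10y⌋ + ⌊x⌋ + ⌊6y⌋. -/
lemma floor_div_int' (s : ℝ) (n : ℤ) (hn : 0 < n) : ⌊s / n⌋ = ⌊s⌋ / n := by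
  have hn' : (0:ℝ) < n := by exact_mod_cast hn
  apply le_antisymm
  · rw [Int.le_ediv_iff_mul_le hn, Int.le_floor]
    push_cast
    calc (⌊s / n⌋ : ℝ) * n ≤ (s / n) * n := by
          have := Int.floor_le (s / n); nlinarith
      _ = s := by field_simp
  · rw [Int.le_floor, le_div_iff₀ hn']
    have h1 : (⌊s⌋ / n) * n ≤ ⌊s⌋ := Int.ediv_mul_le ⌊s⌋ hn.ne'
    have h2 : ((⌊s⌋ / n : ℤ) : ℝ) * n ≤ (⌊s⌋ : ℝ) := by exact_mod_cast h1
    have h3 : (⌊s⌋ : ℝ) ≤ s := Int.floor_le s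
    linarith

lemma floor_key (s : ℝ) (m : ℤ) (hm : m ≤ 5) (hs : (5*m : ℝ) ≤ s) (hs0 : 0 ≤ s) :
    ⌊s/2⌋ + ⌊s/3⌋ + m ≤ ⌊s⌋ := by
  have h2 : ⌊s/(2:ℝ)⌋ = ⌊s⌋ / 2 := by
    have := floor_div_int' s 2 (by norm_num); simpa using this
  have h3 : ⌊s/(3:ℝ)⌋ = ⌊s⌋ / 3 := by
    have := floor_div_int' s 3 (by norm_num); simpa using this
  have hn : 5*m ≤ ⌊s⌋ := by
    rw [Int.le_floor]; push_cast; linarith [show ((5*m:ℤ):ℝ) = 5*(m:ℝ) by push_cast; ring]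
  have hn0 : 0 ≤ ⌊s⌋ := Int.floor_nonneg.mpr hs0
  rw [h2, h3]
  omega

lemma floor_frac (a b : ℝ) (ha : 0 ≤ a) (ha1 : a < 1) (hb : 0 ≤ b) (hb1 : b < 1) :
    ⌊3*a + 15*b⌋ + ⌊2*a + 10*b⌋ + ⌊6*b⌋ ≤ ⌊6*a + 30*b⌋ := by
  set s : ℝ := 6*a + 30*b with hsdef
  have e1 : 3*a + 15*b = s/2 := by rw [hsdef]; ring
  have e2 : 2*a + 10*b = s/3 := by rw [hsdef]; ring
  rw [e1, e2]
  apply floor_key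
  · have h6 : ⌊(6:ℝ)*b⌋ < 6 := Int.floor_lt.mpr (by push_cast; linarith)
    omega
  · have h1 : (↑⌊6*b⌋ : ℝ) ≤ 6*b := Int.floor_le _
    push_cast
    nlinarith
  · rw [hsdef]; linarith

theorem floor_ineq_C (x y : ℝ) (hx : 0 ≤ x) (hy : 0 ≤ y) :
    ⌊3*x + 15*y⌋ + ⌊2*x + 10*y⌋ + ⌊x⌋ + ⌊6*y⌋ ≤ ⌊6*x + 30*y⌋ + ⌊y⌋ := by
  obtain ⟨A, a, ha, ha1, hxa⟩ : ∃ (A : ℤ) (a : ℝ), 0 ≤ a ∧ a < 1 ∧ x = A + a :=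
    ⟨⌊x⌋, Int.fract x, Int.fract_nonneg x, Int.fract_lt_one x, (Int.floor_add_fract x).symm⟩
  obtain ⟨B, b, hb, hb1, hyb⟩ : ∃ (B : ℤ) (b : ℝ), 0 ≤ b ∧ b < 1 ∧ y = B + b :=
    ⟨⌊y⌋, Int.fract y, Int.fract_nonneg y, Int.fract_lt_one y, (Int.floor_add_fract y).symm⟩
  subst hxa hyb
  have r1 : 3*((A:ℝ)+a) + 15*((B:ℝ)+b) = ((3*A + 15*B : ℤ) : ℝ) + (3*a + 15*b) := by
    push_cast; ring
  have r2 : 2*((A:ℝ)+a) + 10*((B:ℝ)+b) = ((2*A + 10*B : ℤ) : ℝ) + (2*a + 10*b) := by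
    push_cast; ring
  have r3 : 6*((B:ℝ)+b) = ((6*B : ℤ) : ℝ) + 6*b := by push_cast; ring
  have r4 : 6*((A:ℝ)+a) + 30*((B:ℝ)+b) = ((6*A + 30*B : ℤ) : ℝ) + (6*a + 30*b) := by
    push_cast; ring
  rw [r1, r2, r3, r4]
  simp only [Int.floor_intCast_add]
  have ha0 : ⌊a⌋ = 0 := Int.floor_eq_zero_iff.mpr ⟨ha, ha1⟩
  have hb0 : ⌊b⌋ = 0 := Int.floor_eq_zero_iff.mpr ⟨hb, hb1⟩
  have key := floor_frac a b ha ha1 hb hb1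
  rw [ha0, hb0]
  omega
end
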